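/- Let M be an n×n Hermitian positive semidefinite complex matrix that is β-banded and whose spectrum is contained in [0, 4ρ] for some ρ > 0, and let τ > 0. Then for all indices k ≠ t with |k−t|/β ≥ 2ρτ, the entries of the matrix exponential satisfy |(exp(−τM))_{kt}| ≤ 10·(exp(−ρτ)/(ρτ))·( eρτβ/|k−t| )^{|k−t|/β}, where e is Euler's number. -/

import Mathlib

/-!
Put `z = ρτ`, `x = |k - t| / β` and `m = ⌈x⌉`. On the spectrum `[0, 4ρ]` write
`e^{-τλ} = e^{-2z} e^{-2zy}` with `y = λ / (2ρ) - 1 ∈ [-1, 1]`. The Jacobi–Anger expansion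
`e^{-2z cos θ} = ∑_{n ∈ ℤ} (-1)^n I_n(2z) cos (nθ)` is a Chebyshev series in `y = cos θ`;
truncating it below degree `m` leaves an error at most `4 e^{z/2} z^m / m!`, because
`I_n(2z) ≤ e^{z/2} z^n / n!` once `2z ≤ n + 1`. The truncation `q` has degree `< x`, so `q(M)` is
`(deg q)β`-banded and vanishes at `(k, t)`; hence the entry of `exp(-τM)` is that of
`exp(-τM) - q(M)`, which is bounded by the error of `q` on the spectrum. Finally
`z^m / m! ≤ (ez/m)^m ≤ (ez/x)^x`, as `s ↦ (ez/s)^s` decreases for `s ≥ z`.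
-/

open scoped ComplexOrder Nat
open Polynomial Real

lemma pow_add_div_factorial_le {z : ℝ} (hz : 0 ≤ z) (m j : ℕ) :
    z ^ (m + j) / (m + j)! ≤ z ^ m / m ! * (z / (m + 1)) ^ j := by
  have h : (m ! : ℝ) * (m + 1) ^ j ≤ (m + j)! := by
    exact_mod_cast Nat.factorial_mul_pow_le_factorial
  calc z ^ (m + j) / (m + j)! ≤ z ^ (m + j) / (m ! * (m + 1) ^ j) := by gcongr
    _ = z ^ m / m ! * (z / (m + 1)) ^ j := by rw [pow_add, div_pow]; field_simp

lemma tsum_pow_add_div_factorial_le {z : ℝ} (hz : 0 ≤ z) {m : ℕ} (hzm : 2 * z ≤ m + 1) :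
    ∑' j : ℕ, z ^ (j + m) / (j + m)! ≤ 2 * (z ^ m / m !) := by
  have hq : z / (m + 1) ≤ 1 / 2 := by rw [div_le_iff₀ (by positivity)]; linarith
  have hgeom : HasSum (fun j : ℕ => z ^ m / m ! * (1 / 2 : ℝ) ^ j) (z ^ m / m ! * 2) :=
    hasSum_geometric_two.mul_left _
  rw [mul_comm]
  refine hasSum_le (fun j => ?_)
    ((summable_nat_add_iff m).2 (Real.summable_pow_div_factorial z)).hasSum hgeom
  rw [add_comm]
  exact (pow_add_div_factorial_le hz m j).trans (by gcongr)

noncomputable def besselTerm (z : ℝ) (m b : ℕ) : ℝ :=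
  z ^ (m + 2 * b) / (b ! * (b + m)!)

/-- `besselCoeff z m` is the modified Bessel function `I_m(2z)`. -/
noncomputable def besselCoeff (z : ℝ) (m : ℕ) : ℝ :=
  ∑' b : ℕ, besselTerm z m b

lemma besselTerm_le {z : ℝ} (hz : 0 ≤ z) (m b : ℕ) :
    besselTerm z m b ≤ z ^ m / m ! * ((z ^ 2 / (m + 1)) ^ b / b !) := by
  calc besselTerm z m b = z ^ b / b ! * (z ^ (m + b) / (m + b)!) := by
        rw [besselTerm, add_comm b m]; ring
    _ ≤ z ^ b / b ! * (z ^ m / m ! * (z / (m + 1)) ^ b) := by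
        gcongr; exact pow_add_div_factorial_le hz m b
    _ = z ^ m / m ! * ((z ^ 2 / (m + 1)) ^ b / b !) := by ring

lemma besselTerm_nonneg {z : ℝ} (hz : 0 ≤ z) (m b : ℕ) : 0 ≤ besselTerm z m b := by
  unfold besselTerm; positivity

lemma summable_besselTerm {z : ℝ} (hz : 0 ≤ z) (m : ℕ) : Summable (besselTerm z m) :=
  .of_nonneg_of_le (besselTerm_nonneg hz m) (besselTerm_le hz m)
    ((Real.summable_pow_div_factorial _).mul_left _)

lemma besselCoeff_le {z : ℝ} (hz : 0 ≤ z) {m : ℕ} (hzm : 2 * z ≤ m + 1) :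
    besselCoeff z m ≤ exp (z / 2) * (z ^ m / m !) := by
  calc besselCoeff z m ≤ ∑' b : ℕ, z ^ m / m ! * ((z ^ 2 / (m + 1)) ^ b / b !) :=
        (summable_besselTerm hz m).tsum_le_tsum (besselTerm_le hz m)
          ((Real.summable_pow_div_factorial _).mul_left _)
    _ = exp (z ^ 2 / (m + 1)) * (z ^ m / m !) := by
        rw [tsum_mul_left, Real.exp_eq_exp_ℝ, NormedSpace.exp_eq_tsum_div, mul_comm]
    _ ≤ exp (z / 2) * (z ^ m / m !) := by
        have : z ^ 2 / (m + 1) ≤ z / 2 := by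
          rw [div_le_div_iff₀ (by positivity) two_pos]; nlinarith
        gcongr

lemma besselCoeff_nonneg {z : ℝ} (hz : 0 ≤ z) (m : ℕ) : 0 ≤ besselCoeff z m :=
  tsum_nonneg (besselTerm_nonneg hz m)

/-- `(m, b) ↦ (p, q)` with `p - q = m` and `min p q = b`, grouping a double series over `ℕ × ℕ`
along its diagonals. -/
def intProdNatEquiv : ℤ × ℕ ≃ ℕ × ℕ where
  toFun x := (x.2 + x.1.toNat, x.2 + (-x.1).toNat)
  invFun x := ((x.1 : ℤ) - x.2, min x.1 x.2)
  left_inv x := by ext <;> dsimp only <;> omega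
  right_inv x := by ext <;> dsimp only <;> omega

/-- The real part of the `p`-th term of the Cauchy product of the exponential series at
`-z e^{iθ}` and at `-z e^{-iθ}`. -/
noncomputable def jacobiAngerTerm (z θ : ℝ) (p : ℕ × ℕ) : ℝ :=
  (-z) ^ (p.1 + p.2) / (p.1 ! * p.2 !) * cos ((p.1 - p.2 : ℝ) * θ)

lemma hasSum_jacobiAngerTerm (z θ : ℝ) :
    HasSum (jacobiAngerTerm z θ) (exp (-(2 * z * cos θ))) := by
  set x : ℂ := -z * Complex.exp (θ * Complex.I)
  set y : ℂ := -z * Complex.exp (-θ * Complex.I)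
  have hprod := summable_mul_of_summable_norm (NormedSpace.norm_expSeries_div_summable x)
    (NormedSpace.norm_expSeries_div_summable y)
  have hxy := (NormedSpace.expSeries_div_hasSum_exp x).mul
    (NormedSpace.expSeries_div_hasSum_exp y) hprod
  have hterm : ∀ p : ℕ × ℕ,
      (x ^ p.1 / p.1 ! * (y ^ p.2 / p.2 !)).re = jacobiAngerTerm z θ p := by
    intro p
    have : x ^ p.1 / p.1 ! * (y ^ p.2 / p.2 !) =
        (((-z) ^ (p.1 + p.2) / (p.1 ! * p.2 !) : ℝ) : ℂ) *
          Complex.exp (((p.1 - p.2 : ℝ) * θ : ℝ) * Complex.I) := by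
      simp only [x, y, mul_pow, ← Complex.exp_nat_mul]
      rw [div_mul_div_comm, mul_mul_mul_comm, ← Complex.exp_add]
      push_cast
      ring_nf
    rw [this, Complex.re_ofReal_mul, Complex.exp_ofReal_mul_I_re, jacobiAngerTerm]
  have hsum : x + y = ((-(2 * z * cos θ) : ℝ) : ℂ) := by
    simp only [x, y]
    push_cast
    rw [Complex.cos]
    ring_nf
  have h := Complex.hasSum_re hxy
  simp only [hterm] at h
  rwa [← NormedSpace.exp_add_of_commute (Commute.all x y), ← Complex.exp_eq_exp_ℂ, hsum,
    ← Complex.ofReal_exp, Complex.ofReal_re] at h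

lemma jacobiAngerTerm_intProdNatEquiv (z θ : ℝ) (m : ℤ) (b : ℕ) :
    jacobiAngerTerm z θ (intProdNatEquiv (m, b)) =
      (-1) ^ m.natAbs * besselTerm z m.natAbs b * cos (m * θ) := by
  have hsign : ∀ s, (-z) ^ (s + 2 * b) = (-1) ^ s * z ^ (s + 2 * b) := fun s => by
    rw [neg_pow, pow_add (-1 : ℝ), pow_mul, neg_one_sq, one_pow, mul_one]
  rcases Int.eq_nat_or_neg m with ⟨s, rfl | rfl⟩
  · simp only [jacobiAngerTerm, besselTerm, intProdNatEquiv, Equiv.coe_fn_mk, Int.toNat_natCast,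
      Int.toNat_neg_natCast, add_zero, Nat.cast_add, add_sub_cancel_left, Int.natAbs_natCast,
      Int.cast_natCast]
    rw [show b + s + b = s + 2 * b by ring, hsign]
    ring
  · simp only [jacobiAngerTerm, besselTerm, intProdNatEquiv, Equiv.coe_fn_mk,
      Int.toNat_neg_natCast, add_zero, neg_neg, Int.toNat_natCast, Nat.cast_add,
      sub_add_cancel_left, neg_mul, cos_neg, Int.natAbs_neg,
      Int.natAbs_natCast, Int.cast_neg, Int.cast_natCast]
    rw [show b + (b + s) = s + 2 * b by ring, hsign]
    ring

theorem hasSum_jacobiAnger (z θ : ℝ) :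
    HasSum (fun m : ℤ => (-1) ^ m.natAbs * besselCoeff z m.natAbs * cos (m * θ))
      (exp (-(2 * z * cos θ))) := by
  have h := intProdNatEquiv.hasSum_iff.2 (hasSum_jacobiAngerTerm z θ)
  refine h.prod_fiberwise fun m => ?_
  have hm := (h.summable.prod_factor m).hasSum
  simp only [Function.comp_apply, jacobiAngerTerm_intProdNatEquiv] at hm ⊢
  rwa [tsum_mul_right, tsum_mul_left] at hm

/-- `I₀(2z) + 2 ∑_{0 < n < m} (-1)ⁿ Iₙ(2z) Tₙ`: the Chebyshev series of `y ↦ e^{-2zy}` truncated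
below degree `m`. -/
noncomputable def expChebyshevTrunc (z : ℝ) (m : ℕ) : ℝ[X] :=
  ∑ n ∈ Finset.range m, C (2 * ((-1) ^ n * besselCoeff z n)) * Chebyshev.T ℝ n -
    C (besselCoeff z 0)

lemma natDegree_expChebyshevTrunc_lt (z : ℝ) {m : ℕ} (hm : 0 < m) :
    (expChebyshevTrunc z m).natDegree < m := by
  have hT : ∀ n ∈ Finset.range m,
      (C (2 * ((-1) ^ n * besselCoeff z n)) * Chebyshev.T ℝ n).natDegree ≤ m - 1 := fun n hn => by
    have := Finset.mem_range.1 hn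
    grw [natDegree_C_mul_le, Chebyshev.natDegree_T, Int.natAbs_natCast]
    omega
  calc (expChebyshevTrunc z m).natDegree ≤ max (m - 1) 0 :=
        natDegree_sub_le_of_le (natDegree_sum_le_of_forall_le _ _ hT) (natDegree_C _).le
    _ < m := by omega

lemma hasSum_exp_sub_eval_expChebyshevTrunc (z θ : ℝ) (m : ℕ) :
    HasSum (fun j : ℕ => 2 * ((-1) ^ (j + m) * besselCoeff z (j + m) * cos ((j + m : ℕ) * θ)))
      (exp (-(2 * z * cos θ)) - (expChebyshevTrunc z m).eval (cos θ)) := by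
  have hfold : HasSum (fun n : ℕ => 2 * ((-1) ^ n * besselCoeff z n * cos (n * θ)))
      (exp (-(2 * z * cos θ)) + besselCoeff z 0) := by
    convert (hasSum_jacobiAnger z θ).nat_add_neg using 1
    · ext n
      simp only [Int.natAbs_natCast, Int.cast_natCast, Int.natAbs_neg, Int.cast_neg, neg_mul,
        cos_neg]
      ring
    · simp
  have heval : (expChebyshevTrunc z m).eval (cos θ) =
      ∑ n ∈ Finset.range m, 2 * ((-1) ^ n * besselCoeff z n * cos (n * θ)) - besselCoeff z 0 := by
    simp [expChebyshevTrunc, eval_finsetSum, Chebyshev.T_real_cos, mul_assoc]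
  rw [heval, sub_sub_eq_add_sub]
  exact (hasSum_nat_add_iff' m).2 hfold

lemma abs_exp_sub_eval_expChebyshevTrunc_le {z : ℝ} (hz : 0 ≤ z) {m : ℕ} (hzm : 2 * z ≤ m + 1)
    {y : ℝ} (hy : y ∈ Set.Icc (-1 : ℝ) 1) :
    |exp (-(2 * z * y)) - (expChebyshevTrunc z m).eval y| ≤ 4 * exp (z / 2) * (z ^ m / m !) := by
  obtain ⟨θ, rfl⟩ : ∃ θ, cos θ = y := ⟨arccos y, cos_arccos hy.1 hy.2⟩
  have hbound : ∀ j : ℕ,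
      ‖2 * ((-1) ^ (j + m) * besselCoeff z (j + m) * cos ((j + m : ℕ) * θ))‖ ≤
        2 * (exp (z / 2) * (z ^ (j + m) / (j + m)!)) := by
    intro j
    have hI := besselCoeff_le hz (m := j + m) (by push_cast; linarith)
    rw [Real.norm_eq_abs, abs_mul, abs_two, abs_mul, abs_mul, abs_pow, abs_neg, abs_one, one_pow,
      one_mul, abs_of_nonneg (besselCoeff_nonneg hz _)]
    exact mul_le_mul_of_nonneg_left
      ((mul_le_of_le_one_right (besselCoeff_nonneg hz _) (abs_cos_le_one _)).trans hI) zero_le_two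
  have hsum := (summable_nat_add_iff m).2 (Real.summable_pow_div_factorial z)
  refine ((hasSum_exp_sub_eval_expChebyshevTrunc z θ m).norm_le_of_bounded
    ((hsum.mul_left (exp (z / 2))).mul_left 2).hasSum hbound).trans ?_
  rw [tsum_mul_left, tsum_mul_left]
  have := tsum_pow_add_div_factorial_le hz hzm
  have := exp_pos (z / 2)
  nlinarith

theorem exists_natDegree_lt_abs_exp_neg_mul_sub_eval_le {ρ τ : ℝ} (hρ : 0 < ρ) (hτ : 0 ≤ τ)
    {m : ℕ} (hm : 0 < m) (hzm : 2 * (ρ * τ) ≤ m + 1) :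
    ∃ q : ℝ[X], q.natDegree < m ∧ ∀ x ∈ Set.Icc 0 (4 * ρ),
      |exp (-(τ * x)) - q.eval x| ≤ 4 * exp (-(3 * (ρ * τ) / 2)) * ((ρ * τ) ^ m / m !) := by
  set z := ρ * τ
  set p := expChebyshevTrunc z m
  refine ⟨C (exp (-(2 * z))) * p.comp (C (2 * ρ)⁻¹ * X - 1), ?_, fun x hx => ?_⟩
  · have hlin : (C (2 * ρ)⁻¹ * X - 1 : ℝ[X]).natDegree ≤ 1 :=
      natDegree_sub_le_of_le ((natDegree_C_mul_le _ _).trans natDegree_X_le) natDegree_one.le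
    calc _ ≤ (p.comp (C (2 * ρ)⁻¹ * X - 1)).natDegree := natDegree_C_mul_le _ _
      _ ≤ p.natDegree * 1 := natDegree_comp_le.trans (Nat.mul_le_mul_left _ hlin)
      _ < m := by rw [mul_one]; exact natDegree_expChebyshevTrunc_lt z hm
  have hy : (2 * ρ)⁻¹ * x - 1 ∈ Set.Icc (-1 : ℝ) 1 := by
    constructor
    · have : 0 ≤ (2 * ρ)⁻¹ * x := mul_nonneg (by positivity) hx.1
      linarith
    · rw [sub_le_iff_le_add, inv_mul_le_iff₀ (by positivity)]
      linarith [hx.2]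
  have hsplit : exp (-(τ * x)) = exp (-(2 * z)) * exp (-(2 * z * ((2 * ρ)⁻¹ * x - 1))) := by
    rw [← exp_add]
    congr 1
    field_simp
    ring
  have hexp : exp (-(2 * z)) * exp (z / 2) = exp (-(3 * z / 2)) := by rw [← exp_add]; ring_nf
  simp only [eval_mul, eval_C, eval_comp, eval_sub, eval_X, eval_one]
  rw [hsplit, ← mul_sub, abs_mul, abs_of_pos (exp_pos _), ← hexp]
  calc _ ≤ exp (-(2 * z)) * (4 * exp (z / 2) * (z ^ m / m !)) :=
        mul_le_mul_of_nonneg_left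
          (abs_exp_sub_eval_expChebyshevTrunc_le (mul_nonneg hρ.le hτ) hzm hy) (exp_pos _).le
    _ = _ := by ring

namespace Matrix

section Banded

variable {n : ℕ} {R : Type*}

def IsBanded [Zero R] (β : ℝ) (A : Matrix (Fin n) (Fin n) R) : Prop :=
  ∀ i j : Fin n, β < |((i : ℕ) : ℝ) - ((j : ℕ) : ℝ)| → A i j = 0

namespace IsBanded

lemma mono [Zero R] {β γ : ℝ} {A : Matrix (Fin n) (Fin n) R} (hA : A.IsBanded β) (h : β ≤ γ) :
    A.IsBanded γ :=
  fun i j hij => hA i j (h.trans_lt hij)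

lemma one [Zero R] [One R] : (1 : Matrix (Fin n) (Fin n) R).IsBanded 0 := fun i j hij =>
  one_apply_ne fun h => by simp [h] at hij

lemma mul [NonUnitalNonAssocSemiring R] {β γ : ℝ} {A B : Matrix (Fin n) (Fin n) R}
    (hA : A.IsBanded β) (hB : B.IsBanded γ) : (A * B).IsBanded (β + γ) := by
  intro i j hij
  rw [mul_apply]
  refine Finset.sum_eq_zero fun s _ => ?_
  rcases lt_or_ge β |((i : ℕ) : ℝ) - ((s : ℕ) : ℝ)| with his | his
  · rw [hA i s his, zero_mul]
  · have hsj : γ < |((s : ℕ) : ℝ) - ((j : ℕ) : ℝ)| := by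
      have := abs_sub_le ((i : ℕ) : ℝ) ((s : ℕ) : ℝ) ((j : ℕ) : ℝ)
      linarith
    rw [hB s j hsj, mul_zero]

lemma pow [Semiring R] {β : ℝ} {A : Matrix (Fin n) (Fin n) R} (hA : A.IsBanded β) (k : ℕ) :
    (A ^ k).IsBanded (k * β) := by
  induction k with
  | zero => simpa using one
  | succ k ih => simpa [pow_succ, add_mul] using ih.mul hA

lemma aeval {S : Type*} [CommSemiring S] [Semiring R] [Algebra S R] {β : ℝ} (hβ : 0 ≤ β)
    {A : Matrix (Fin n) (Fin n) R} (hA : A.IsBanded β) (q : S[X]) :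
    (Polynomial.aeval A q).IsBanded (q.natDegree * β) := by
  intro i j hij
  rw [aeval_eq_sum_range, sum_apply]
  refine Finset.sum_eq_zero fun k hk => ?_
  have hk : (k : ℝ) ≤ q.natDegree := by exact_mod_cast Finset.mem_range_succ_iff.mp hk
  rw [smul_apply, (hA.pow k).mono (mul_le_mul_of_nonneg_right hk hβ) i j hij, smul_zero]

end IsBanded

end Banded

section Spectral

variable {ι 𝕜 : Type*} [Fintype ι] [DecidableEq ι] [RCLike 𝕜]

lemma sum_norm_sq_row_of_mem_unitary {U : Matrix ι ι 𝕜} (hU : U ∈ unitary (Matrix ι ι 𝕜)) (k : ι) :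
    ∑ i, ‖U k i‖ ^ 2 = 1 := by
  have h : (U * star U) k k = 1 := by rw [Unitary.mul_star_self_of_mem hU, one_apply_eq]
  simp only [mul_apply, star_apply, RCLike.star_def, RCLike.mul_conj] at h
  exact_mod_cast h

lemma norm_unitary_mul_diagonal_mul_star_apply_le {U : Matrix ι ι 𝕜}
    (hU : U ∈ unitary (Matrix ι ι 𝕜)) {w : ι → 𝕜} {B : ℝ} (hw : ∀ i, ‖w i‖ ≤ B) (k t : ι) :
    ‖(U * diagonal w * star U) k t‖ ≤ B := by
  calc ‖(U * diagonal w * star U) k t‖ = ‖∑ i, U k i * w i * star (U t i)‖ := by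
        simp only [mul_apply (M := U * diagonal w), mul_diagonal, star_apply]
    _ ≤ ∑ i, B * ((‖U k i‖ ^ 2 + ‖U t i‖ ^ 2) / 2) := by
        refine (norm_sum_le _ _).trans (Finset.sum_le_sum fun i _ => ?_)
        rw [norm_mul, norm_mul, norm_star, mul_right_comm, mul_comm]
        exact mul_le_mul (hw i) (by nlinarith [two_mul_le_add_sq ‖U k i‖ ‖U t i‖])
          (by positivity) ((norm_nonneg _).trans (hw i))
    _ = B := by
        rw [← Finset.mul_sum, ← Finset.sum_div, Finset.sum_add_distrib,
          sum_norm_sq_row_of_mem_unitary hU, sum_norm_sq_row_of_mem_unitary hU]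
        ring

namespace IsHermitian

variable {A : Matrix ι ι 𝕜}

lemma exp_neg_smul_eq_cfc (hA : A.IsHermitian) (τ : ℝ) :
    NormedSpace.exp (-(τ • A)) = cfc (fun x => Real.exp (-(τ * x))) A := by
  set U : Matrix ι ι 𝕜 := (hA.eigenvectorUnitary : Matrix ι ι 𝕜)
  have hconj : ∀ X, NormedSpace.exp (U * X * star U) = U * NormedSpace.exp X * star U :=
    Matrix.exp_units_conj (Unitary.toUnits hA.eigenvectorUnitary)
  have hD : -(τ • A) = U * diagonal (fun i => ((-(τ * hA.eigenvalues i) : ℝ) : 𝕜)) * star U := by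
    conv_lhs => rw [hA.spectral_theorem, Unitary.conjStarAlgAut_apply]
    rw [← Matrix.smul_mul, ← Matrix.mul_smul, ← neg_mul, ← mul_neg]
    congr 2
    ext i j
    rcases eq_or_ne i j with rfl | hij
    · simp [RCLike.real_smul_eq_coe_mul]
    · simp [hij]
  rw [hD, hconj, exp_diagonal, hA.cfc_eq, IsHermitian.cfc, Unitary.conjStarAlgAut_apply]
  refine congrArg (fun d => U * diagonal d * star U) (funext fun i => ?_)
  simp only [Function.comp_apply, Pi.exp_def, Real.exp_eq_exp_ℝ, ← RCLike.algebraMap_eq_ofReal,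
    NormedSpace.algebraMap_exp_comm, map_neg, map_mul]

lemma aeval_eq_cfc (hA : A.IsHermitian) (q : ℝ[X]) : aeval A q = cfc q.eval A :=
  (cfc_polynomial q A hA.isSelfAdjoint).symm

lemma norm_cfc_apply_le (hA : A.IsHermitian) {f : ℝ → ℝ} {B : ℝ}
    (hf : ∀ i, |f (hA.eigenvalues i)| ≤ B) (k t : ι) :
    ‖cfc f A k t‖ ≤ B := by
  rw [hA.cfc_eq, IsHermitian.cfc, Unitary.conjStarAlgAut_apply]
  exact norm_unitary_mul_diagonal_mul_star_apply_le hA.eigenvectorUnitary.2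
    (fun i => by simpa using hf i) k t

end IsHermitian

end Spectral

lemma IsHermitian.norm_exp_neg_smul_apply_le {n : ℕ} {M : Matrix (Fin n) (Fin n) ℂ}
    (hM : M.IsHermitian) {β : ℝ} (hβ : 0 ≤ β) (hband : M.IsBanded β) (τ : ℝ) {q : ℝ[X]}
    {k t : Fin n}
    (hq : q.natDegree * β < |((k : ℕ) : ℝ) - ((t : ℕ) : ℝ)|) {B : ℝ}
    (hB : ∀ i, |Real.exp (-(τ * hM.eigenvalues i)) - q.eval (hM.eigenvalues i)| ≤ B) :
    ‖NormedSpace.exp (-(τ • M)) k t‖ ≤ B := by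
  have hzero : aeval M q k t = 0 := hband.aeval hβ q k t hq
  rw [← sub_zero (NormedSpace.exp (-(τ • M)) k t), ← hzero, ← sub_apply, hM.exp_neg_smul_eq_cfc,
    hM.aeval_eq_cfc, ← cfc_sub (fun x => Real.exp (-(τ * x))) q.eval]
  exact hM.norm_cfc_apply_le hB k t

end Matrix

lemma pow_div_factorial_le_exp_one_mul_div_pow {z : ℝ} (hz : 0 ≤ z) (m : ℕ) :
    z ^ m / m ! ≤ (exp 1 * z / m) ^ m := by
  rcases m.eq_zero_or_pos with rfl | hm
  · simp
  have hm' : (0 : ℝ) < m := by exact_mod_cast hm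
  have h := Real.pow_div_factorial_le_exp (x := (m : ℝ)) hm'.le m
  rw [← exp_one_pow] at h
  calc z ^ m / m ! = (z / m) ^ m * ((m : ℝ) ^ m / m !) := by
        rw [div_pow]; field_simp
    _ ≤ (z / m) ^ m * exp 1 ^ m := by gcongr
    _ = (exp 1 * z / m) ^ m := by rw [← mul_pow]; ring

/-- After taking logarithms this is `(b - a) (1 + log z) ≤ b log b - a log a`, which follows from
`b log (b / a) ≥ b - a` and `log z ≤ log a`. -/
lemma exp_one_mul_div_rpow_le_of_le {z a b : ℝ} (hz : 0 < z) (hza : z ≤ a) (hab : a ≤ b) :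
    (exp 1 * z / b) ^ b ≤ (exp 1 * z / a) ^ a := by
  have ha := hz.trans_le hza
  have hb := ha.trans_le hab
  rw [rpow_def_of_pos (by positivity), rpow_def_of_pos (by positivity), exp_le_exp,
    log_div (by positivity) hb.ne', log_div (by positivity) ha.ne', log_mul (by positivity) hz.ne',
    log_exp]
  have hlog : 1 - a / b ≤ log b - log a := by
    rw [← log_div hb.ne' ha.ne']
    simpa using one_sub_inv_le_log_of_pos (div_pos hb ha)
  have hza' : log z ≤ log a := log_le_log hz hza
  have : b - a ≤ b * (log b - log a) := by
    have := mul_le_mul_of_nonneg_left hlog hb.le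
    rwa [mul_sub, mul_one, mul_div_cancel₀ _ hb.ne'] at this
  nlinarith

lemma pow_div_factorial_le_exp_one_mul_div_rpow {z x : ℝ} (hz : 0 < z) (hzx : z ≤ x) {m : ℕ}
    (hxm : x ≤ m) : z ^ m / m ! ≤ (exp 1 * z / x) ^ x := calc
  z ^ m / m ! ≤ (exp 1 * z / m) ^ (m : ℝ) := by
    rw [rpow_natCast]; exact pow_div_factorial_le_exp_one_mul_div_pow hz.le m
  _ ≤ (exp 1 * z / x) ^ x := exp_one_mul_div_rpow_le_of_le hz hzx hxm

lemma four_mul_exp_le {z : ℝ} (hz : 0 < z) :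
    4 * exp (-(3 * z / 2)) ≤ 10 * (exp (-z) / z) := by
  have h : exp (-(3 * z / 2)) * exp (z / 2) = exp (-z) := by rw [← exp_add]; ring_nf
  have := add_one_le_exp (z / 2)
  rw [mul_div_assoc', le_div_iff₀ hz, ← h]
  have := exp_pos (-(3 * z / 2))
  nlinarith

theorem exp_banded_entry_bound_regime_two_general
    (n β : ℕ) (hβ : 0 < β) (M : Matrix (Fin n) (Fin n) ℂ) (ρ τ : ℝ)
    (hρ : 0 < ρ) (hτ : 0 < τ)
    (hM : M.PosSemidef)
    (hspec : ∀ i, hM.1.eigenvalues i ∈ Set.Icc (0 : ℝ) (4 * ρ))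
    (hband : ∀ i j : Fin n, (β : ℝ) < |((i : ℕ) : ℝ) - ((j : ℕ) : ℝ)| → M i j = 0)
    (k t : Fin n)
    (h2 : 2 * ρ * τ ≤ |((k : ℕ) : ℝ) - ((t : ℕ) : ℝ)| / β) :
    ‖(NormedSpace.exp (-(τ • M))) k t‖ ≤
      10 * (Real.exp (-(ρ * τ)) / (ρ * τ)) *
        (Real.exp 1 * ρ * τ * β / |((k : ℕ) : ℝ) - ((t : ℕ) : ℝ)|) ^
          (|((k : ℕ) : ℝ) - ((t : ℕ) : ℝ)| / β) := by
  set d := |((k : ℕ) : ℝ) - ((t : ℕ) : ℝ)|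
  set x := d / β
  set z := ρ * τ
  have hβ' : (0 : ℝ) < β := by exact_mod_cast hβ
  have hz : 0 < z := mul_pos hρ hτ
  have hzx : 2 * z ≤ x := by linarith
  set m := ⌈x⌉₊
  have hxm : x ≤ m := Nat.le_ceil x
  have hmx : (m : ℝ) < x + 1 := Nat.ceil_lt_add_one (by linarith)
  obtain ⟨q, hqdeg, hq⟩ :=
    exists_natDegree_lt_abs_exp_neg_mul_sub_eval_le (m := m) hρ hτ.le
      (Nat.ceil_pos.2 (by linarith)) (by linarith)
  have hqβ : q.natDegree * (β : ℝ) < d := by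
    have : (q.natDegree : ℝ) + 1 ≤ m := by exact_mod_cast hqdeg
    calc q.natDegree * (β : ℝ) < x * β := by gcongr; linarith
      _ = d := div_mul_cancel₀ _ hβ'.ne'
  refine (hM.1.norm_exp_neg_smul_apply_le β.cast_nonneg hband τ hqβ
    fun i => hq _ (hspec i)).trans ?_
  calc 4 * exp (-(3 * z / 2)) * (z ^ m / m !) ≤ 10 * (exp (-z) / z) * (exp 1 * z / x) ^ x :=
        mul_le_mul (four_mul_exp_le hz)
          (pow_div_factorial_le_exp_one_mul_div_rpow hz (by linarith) hxm) (by positivity)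
          (by positivity)
    _ = _ := by
        congr 2
        simp only [x, z]
        field_simp

/-- Entrywise superexponential decay bound (regime ii) for the exponential of a banded
Hermitian positive semidefinite matrix: if `M` is `β`-banded with spectrum in `[0, 4ρ]`,
`τ > 0`, and the indices `k ≠ t` satisfy `|k - t|/β ≥ 2ρτ`, then
`|(exp (-τM))_{kt}| ≤ 10 (exp(-ρτ)/(ρτ)) (eρτβ/|k-t|)^{|k-t|/β}`. -/
theorem exp_banded_entry_bound_regime_two
    (n β : ℕ) (hβ : 0 < β) (M : Matrix (Fin n) (Fin n) ℂ) (ρ τ : ℝ)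
    (hρ : 0 < ρ) (hτ : 0 < τ)
    (hM : M.PosSemidef)
    (hspec : ∀ i, hM.1.eigenvalues i ∈ Set.Icc (0 : ℝ) (4 * ρ))
    (hband : ∀ i j : Fin n, (β : ℝ) < |((i : ℕ) : ℝ) - ((j : ℕ) : ℝ)| → M i j = 0)
    (k t : Fin n) (hkt : k ≠ t)
    (h2 : 2 * ρ * τ ≤ |((k : ℕ) : ℝ) - ((t : ℕ) : ℝ)| / β) :
    ‖(NormedSpace.exp (-(τ • M))) k t‖ ≤
      10 * (Real.exp (-(ρ * τ)) / (ρ * τ)) *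
        (Real.exp 1 * ρ * τ * β / |((k : ℕ) : ℝ) - ((t : ℕ) : ℝ)|) ^
          (|((k : ℕ) : ℝ) - ((t : ℕ) : ℝ)| / β) :=
  exp_banded_entry_bound_regime_two_general n β hβ M ρ τ hρ hτ hM hspec hband k t h2
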